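/- Let s ≥ 2 be an integer. There is no circuit F on the full clock network N_7({1,2}) over ℤ_s that solves the network (i.e., whose valuation satisfies (X_8, X_9) = c for every input c ∈ ℤ_s²) and whose valuation additionally satisfies X_i + X_{i+1} + X_{i+2} ≡ 0 (mod s) for all i = 1, 2, 3, 4, 5 and every input c ∈ ℤ_s². -/
import Mathlib

/-- The valuation of a circuit on the clock network `N_n({1,2})`, defined recursively. -/
noncomputable def valX (s : ℕ) (f : ℕ → ({ j // j ∈ ({1, 2} : Finset ℕ) } → ZMod s) → ZMod s)
    (c : Fin 2 → ZMod s) : ℕ → ZMod s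
  | 0 => c 0
  | 1 => c 1
  | (n+2) => f (n+2) (fun j => valX s f c (n + 2 - (j : ℕ)))
termination_by k => k
decreasing_by
  have hj : (j : ℕ) = 1 ∨ (j : ℕ) = 2 := by
    have h2 := j.2
    rw [Finset.mem_insert, Finset.mem_singleton] at h2
    exact h2
  rcases hj with h | h <;> omega

/-- There is no circuit on the full clock network `N_7({1,2})` over `ℤ_s` which both
solves the network and whose valuation satisfies
`X_i + X_{i+1} + X_{i+2} ≡ 0 (mod s)` for `i = 1, …, 5` for every input.
(Everything is 0-indexed: the valuation `X` satisfies `X i = c i` for the two input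
nodes `i = 0, 1`, and `X k = f k (fun j => X (k - j))` for the nodes `2 ≤ k < 9`;
the outputs are `X 7, X 8` and the sum condition is `X i + X (i+1) + X (i+2) = 0`
for `i = 0, …, 4`.) -/
theorem no_solving_circuit_with_zero_sums (s : ℕ) (hs : 2 ≤ s) :
    ¬ ∃ f : ℕ → ({ j // j ∈ ({1, 2} : Finset ℕ) } → ZMod s) → ZMod s,
      ∀ c : Fin 2 → ZMod s, ∀ X : ℕ → ZMod s,
        (∀ i : Fin 2, X (i : ℕ) = c i) →
        (∀ k : ℕ, 2 ≤ k → k < 9 → X k = f k fun j => X (k - (j : ℕ))) →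
        ((∀ i : Fin 2, X (7 + (i : ℕ)) = c i) ∧
          ∀ i : ℕ, i < 5 → X i + X (i + 1) + X (i + 2) = 0) := by
  rintro ⟨f, hf⟩
  haveI : Fact (1 < s) := ⟨hs⟩
  -- basic properties of the recursively-defined valuation
  have hinit : ∀ c : Fin 2 → ZMod s, ∀ i : Fin 2, valX s f c (i : ℕ) = c i := by
    intro c i
    fin_cases i <;> simp [valX]
  have hrec : ∀ c : Fin 2 → ZMod s, ∀ k : ℕ, 2 ≤ k → k < 9 →
      valX s f c k = f k fun j => valX s f c (k - (j : ℕ)) := by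
    intro c k hk _
    obtain ⟨n, rfl⟩ : ∃ n, k = n + 2 := ⟨k - 2, by omega⟩
    rw [valX]
  set A := valX s f ![0, 0] with hA
  set B := valX s f ![0, 1] with hB
  obtain ⟨hAout, hAsum⟩ := hf ![0,0] A (hinit _) (hrec _)
  obtain ⟨hBout, hBsum⟩ := hf ![0,1] B (hinit _) (hrec _)
  -- compute A 0 .. A 6 and B 0 .. B 6 from the sum conditions
  have hA0 : A 0 = 0 := hinit ![0,0] 0
  have hA1 : A 1 = 0 := hinit ![0,0] 1
  have hB0 : B 0 = 0 := hinit ![0,1] 0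
  have hB1 : B 1 = 1 := hinit ![0,1] 1
  have hA2 := hAsum 0 (by norm_num)
  have hA3 := hAsum 1 (by norm_num)
  have hA4 := hAsum 2 (by norm_num)
  have hA5 := hAsum 3 (by norm_num)
  have hA6 := hAsum 4 (by norm_num)
  have hB2 := hBsum 0 (by norm_num)
  have hB3 := hBsum 1 (by norm_num)
  have hB4 := hBsum 2 (by norm_num)
  have hB5 := hBsum 3 (by norm_num)
  have hB6 := hBsum 4 (by norm_num)
  have hA2' : A 2 = 0 := by rw [hA0, hA1] at hA2; linear_combination hA2
  have hA3' : A 3 = 0 := by rw [hA1, hA2'] at hA3; linear_combination hA3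
  have hA4' : A 4 = 0 := by rw [hA2', hA3'] at hA4; linear_combination hA4
  have hA5' : A 5 = 0 := by rw [hA3', hA4'] at hA5; linear_combination hA5
  have hA6' : A 6 = 0 := by rw [hA4', hA5'] at hA6; linear_combination hA6
  have hB2' : B 2 = -1 := by rw [hB0, hB1] at hB2; linear_combination hB2
  have hB3' : B 3 = 0 := by rw [hB1, hB2'] at hB3; linear_combination hB3
  have hB4' : B 4 = 1 := by rw [hB2', hB3'] at hB4; linear_combination hB4
  have hB5' : B 5 = -1 := by rw [hB3', hB4'] at hB5; linear_combination hB5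
  have hB6' : B 6 = 0 := by rw [hB4', hB5'] at hB6; linear_combination hB6
  have hA7 : A 7 = 0 := by simpa using hAout 0
  have hB7 : B 7 = 0 := by simpa using hBout 0
  have hA8 : A 8 = 0 := by simpa using hAout 1
  have hB8 : B 8 = 1 := by simpa using hBout 1
  have heq : A 8 = B 8 := by
    rw [hA, hB, hrec ![0,0] 8 (by norm_num) (by norm_num), hrec ![0,1] 8 (by norm_num) (by norm_num)]
    congr 1
    funext j
    have hj : (j : ℕ) = 1 ∨ (j : ℕ) = 2 := by
      have h2 := j.2
      rw [Finset.mem_insert, Finset.mem_singleton] at h2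
      exact h2
    rcases hj with h | h <;> rw [h]
    · exact (hA.symm ▸ hA7 : valX s f ![0,0] 7 = 0).trans (hB.symm ▸ hB7 : valX s f ![0,1] 7 = 0).symm
    · exact (hA.symm ▸ hA6' : valX s f ![0,0] 6 = 0).trans (hB.symm ▸ hB6' : valX s f ![0,1] 6 = 0).symm
  rw [hA8, hB8] at heq
  exact one_ne_zero heq.symm
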